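/- For every q with 1 ≤ q ≤ 2 and all real numbers X, Y, ( X − Y )·( sgn(X)·|X|^{q−1} − sgn(Y)·|Y|^{q−1} ) ≥ ( sgn(X)·|X|^{q−1} − sgn(Y)·|Y|^{q−1} )² · |X·Y|^{(2−q)/2}. -/
import Mathlib


open Real

/-- The odd power function `t ↦ sgn(t)·|t|^{q−1}` (equal to `t·|t|^{q−2}` for
`t ≠ 0` and to `0` at `t = 0`). -/
noncomputable def oddPow (q t : ℝ) : ℝ := Real.sign t * |t| ^ (q - 1)

private lemma sgn_mul_abs (t : ℝ) : Real.sign t * |t| = t := by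
  rcases lt_trichotomy t 0 with h | rfl | h
  · rw [Real.sign_of_neg h, abs_of_neg h]; ring
  · simp
  · rw [Real.sign_of_pos h, abs_of_pos h]; ring

/-- Monotonicity of the odd power map. -/
private lemma oddp_mono {p : ℝ} (hp : 0 ≤ p) {X Y : ℝ} (h : Y ≤ X) :
    Real.sign Y * |Y| ^ p ≤ Real.sign X * |X| ^ p := by
  rcases lt_trichotomy Y 0 with hY | rfl | hY
  · rcases lt_trichotomy X 0 with hX | rfl | hX
    · rw [Real.sign_of_neg hY, Real.sign_of_neg hX, abs_of_neg hY, abs_of_neg hX]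
      have := Real.rpow_le_rpow (by linarith : (0:ℝ) ≤ -X) (by linarith : -X ≤ -Y) hp
      linarith
    · rw [Real.sign_zero, zero_mul, Real.sign_of_neg hY]
      have : 0 ≤ |Y| ^ p := Real.rpow_nonneg (abs_nonneg Y) p
      nlinarith
    · rw [Real.sign_of_neg hY, Real.sign_of_pos hX]
      have h1 : 0 ≤ |Y| ^ p := Real.rpow_nonneg (abs_nonneg Y) p
      have h2 : 0 ≤ |X| ^ p := Real.rpow_nonneg (abs_nonneg X) p
      nlinarith
  · rw [Real.sign_zero, zero_mul]
    rcases eq_or_lt_of_le h with rfl | hX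
    · simp
    · rw [Real.sign_of_pos hX]
      have : 0 ≤ |X| ^ p := Real.rpow_nonneg (abs_nonneg X) p
      linarith
  · have hX : 0 < X := lt_of_lt_of_le hY h
    rw [Real.sign_of_pos hY, Real.sign_of_pos hX, one_mul, one_mul]
    exact Real.rpow_le_rpow (abs_nonneg Y)
      (by rw [abs_of_pos hY, abs_of_pos hX]; exact h) hp

private lemma key (q : ℝ) (h1 : 1 ≤ q) (h2 : q ≤ 2) (X Y : ℝ) (hXY : Y ≤ X) :
    (oddPow q X - oddPow q Y)^2 * |X * Y| ^ ((2 - q) / 2)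
      ≤ (X - Y) * (oddPow q X - oddPow q Y) := by
  set e := (2 - q) / 2 with he
  have he0 : 0 ≤ e := by rw [he]; linarith
  have hq0 : 0 ≤ q - 1 := by linarith
  -- f * h = g
  have fh : ∀ t : ℝ, oddPow q t * |t| ^ e = Real.sign t * |t| ^ (q / 2) := by
    intro t
    rcases eq_or_ne t 0 with rfl | ht
    · simp [oddPow]
    · have hpos : (0:ℝ) < |t| := abs_pos.mpr ht
      rw [oddPow, mul_assoc, ← Real.rpow_add hpos]
      congr 1
      rw [he]; ring_nf
  -- g * h = t
  have gh : ∀ t : ℝ, (Real.sign t * |t| ^ (q / 2)) * |t| ^ e = t := by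
    intro t
    rcases eq_or_ne t 0 with rfl | ht
    · simp
    · have hpos : (0:ℝ) < |t| := abs_pos.mpr ht
      rw [mul_assoc, ← Real.rpow_add hpos]
      have hq2 : q / 2 + e = 1 := by rw [he]; ring
      rw [hq2, Real.rpow_one, sgn_mul_abs]
  have hmul : |X * Y| ^ e = |X| ^ e * |Y| ^ e := by
    rw [abs_mul, Real.mul_rpow (abs_nonneg X) (abs_nonneg Y)]
  have fmono : oddPow q Y ≤ oddPow q X := oddp_mono hq0 hXY
  -- the sign claim in g-form
  have gclaim : 0 ≤ (|X| ^ e - |Y| ^ e) *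
      (Real.sign X * |X| ^ (q / 2) + Real.sign Y * |Y| ^ (q / 2)) := by
    have hXnn : 0 ≤ |X| ^ (q / 2) := Real.rpow_nonneg (abs_nonneg X) _
    have hYnn : 0 ≤ |Y| ^ (q / 2) := Real.rpow_nonneg (abs_nonneg Y) _
    rcases le_or_gt 0 Y with hY | hY
    · have hXp : 0 ≤ X := le_trans hY hXY
      have habs : |Y| ≤ |X| := by
        rw [abs_of_nonneg hY, abs_of_nonneg hXp]; exact hXY
      have hd : |Y| ^ e ≤ |X| ^ e := Real.rpow_le_rpow (abs_nonneg Y) habs he0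
      have sX : 0 ≤ Real.sign X := by
        rcases eq_or_lt_of_le hXp with rfl | h
        · simp
        · rw [Real.sign_of_pos h]; norm_num
      have sY : 0 ≤ Real.sign Y := by
        rcases eq_or_lt_of_le hY with rfl | h
        · simp
        · rw [Real.sign_of_pos h]; norm_num
      exact mul_nonneg (by linarith)
        (add_nonneg (mul_nonneg sX hXnn) (mul_nonneg sY hYnn))
    · rcases le_or_gt X 0 with hX | hX
      · have habs : |X| ≤ |Y| := by
          rw [abs_of_nonpos hX, abs_of_neg hY]; linarith
        have hd : |X| ^ e ≤ |Y| ^ e := Real.rpow_le_rpow (abs_nonneg X) habs he0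
        have sX : Real.sign X ≤ 0 := by
          rcases eq_or_lt_of_le hX with rfl | h
          · simp
          · rw [Real.sign_of_neg h]; norm_num
        have sY : Real.sign Y ≤ 0 := by rw [Real.sign_of_neg hY]; norm_num
        have t1 : Real.sign X * |X| ^ (q / 2) ≤ 0 := mul_nonpos_of_nonpos_of_nonneg sX hXnn
        have t2 : Real.sign Y * |Y| ^ (q / 2) ≤ 0 := mul_nonpos_of_nonpos_of_nonneg sY hYnn
        nlinarith
      · rw [Real.sign_of_pos hX, Real.sign_of_neg hY]
        rcases le_total |Y| |X| with hab | hab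
        · have hd : |Y| ^ e ≤ |X| ^ e := Real.rpow_le_rpow (abs_nonneg Y) hab he0
          have hm : |Y| ^ (q / 2) ≤ |X| ^ (q / 2) :=
            Real.rpow_le_rpow (abs_nonneg Y) hab (by linarith)
          nlinarith
        · have hd : |X| ^ e ≤ |Y| ^ e := Real.rpow_le_rpow (abs_nonneg X) hab he0
          have hm : |X| ^ (q / 2) ≤ |Y| ^ (q / 2) :=
            Real.rpow_le_rpow (abs_nonneg X) hab (by linarith)
          nlinarith
  -- sign claim in f*h form
  have sclaim : 0 ≤ (|X| ^ e - |Y| ^ e) *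
      (oddPow q X * |X| ^ e + oddPow q Y * |Y| ^ e) := by
    rw [fh X, fh Y]; exact gclaim
  have eX : X = oddPow q X * |X| ^ e * |X| ^ e := by rw [fh X, gh X]
  have eY : Y = oddPow q Y * |Y| ^ e * |Y| ^ e := by rw [fh Y, gh Y]
  have ident : (X - Y) * (oddPow q X - oddPow q Y)
      - (oddPow q X - oddPow q Y)^2 * (|X| ^ e * |Y| ^ e)
      = ((|X| ^ e - |Y| ^ e) * (oddPow q X * |X| ^ e + oddPow q Y * |Y| ^ e))
        * (oddPow q X - oddPow q Y) := by
    linear_combination (oddPow q X - oddPow q Y) * eX - (oddPow q X - oddPow q Y) * eY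
  have P : 0 ≤ ((|X| ^ e - |Y| ^ e) * (oddPow q X * |X| ^ e + oddPow q Y * |Y| ^ e))
      * (oddPow q X - oddPow q Y) :=
    mul_nonneg sclaim (by linarith)
  rw [hmul]
  linarith

/-- For `1 ≤ q ≤ 2` and all reals `X, Y`,
`(X − Y)(X|X|^{q−2} − Y|Y|^{q−2}) ≥ (X|X|^{q−2} − Y|Y|^{q−2})²·|XY|^{(2−q)/2}`. -/
theorem oddPow_pointwise_inequality :
    ∀ q : ℝ, 1 ≤ q → q ≤ 2 → ∀ X Y : ℝ,
      (oddPow q X - oddPow q Y)^2 * |X * Y| ^ ((2 - q) / 2)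
        ≤ (X - Y) * (oddPow q X - oddPow q Y) := by
  intro q h1 h2 X Y
  rcases le_total Y X with h | h
  · exact key q h1 h2 X Y h
  · have := key q h1 h2 Y X h
    rw [mul_comm Y X] at this
    nlinarith [this]
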